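/- Let μ ∈ P be a weight with ⟨μ,α^∨⟩ ≥ −1 for all α ∈ Φ^+. Then for every dominant weight λ ∈ P_{≥0} with μ ≤ λ in root order, it holds that μ_dom ≤ λ, where μ_dom is the unique dominant element of the Weyl group orbit W(μ). -/

import Mathlib

open RealInnerProductSpace Pointwise

/-- The covector `α^∨ := 2α/⟨α,α⟩` of a vector `α`. -/
noncomputable def corootOf {V : Type*} [NormedAddCommGroup V] [InnerProductSpace ℝ V]
    (α : V) : V := (2 / ⟪α, α⟫) • α

/-- The reflection `s_α(u) := u - ⟨u,α^∨⟩α`. -/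
noncomputable def rsReflect {V : Type*} [NormedAddCommGroup V] [InnerProductSpace ℝ V]
    (α u : V) : V := u - ⟪u, corootOf α⟫ • α

/-- An irreducible crystallographic reduced root system in a Euclidean space `V`,
together with a chosen base `α_1, …, α_n` of simple roots. -/
structure RootSystemData (V : Type*) [NormedAddCommGroup V] [InnerProductSpace ℝ V]
    (n : ℕ) where
  Φ : Set V
  finite : Φ.Finite
  nonzero : ∀ α ∈ Φ, α ≠ 0
  spans : Submodule.span ℝ Φ = ⊤
  reflect_mem : ∀ α ∈ Φ, ∀ β ∈ Φ, rsReflect α β ∈ Φ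
  reduced : ∀ α ∈ Φ, (Submodule.span ℝ {α} : Set V) ∩ Φ = {α, -α}
  crystal : ∀ α ∈ Φ, ∀ β ∈ Φ, ∃ z : ℤ, ⟪β, corootOf α⟫ = (z : ℝ)
  irred : ¬∃ Φ₁ Φ₂ : Set V, Φ₁.Nonempty ∧ Φ₂.Nonempty ∧ Φ₁ ∪ Φ₂ = Φ ∧
    Disjoint Φ₁ Φ₂ ∧ ∀ α ∈ Φ₁, ∀ β ∈ Φ₂, ⟪α, β⟫ = 0
  simple : Fin n → V
  simple_mem : ∀ i, simple i ∈ Φ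
  simple_indep : LinearIndependent ℝ simple
  simple_span : Submodule.span ℝ (Set.range simple) = ⊤
  root_combo : ∀ α ∈ Φ, (∃ c : Fin n → ℕ, α = ∑ i, (c i : ℝ) • simple i) ∨
    (∃ c : Fin n → ℕ, α = -∑ i, (c i : ℝ) • simple i)

namespace RootSystemData

variable {V : Type*} [NormedAddCommGroup V] [InnerProductSpace ℝ V] {n : ℕ}

/-- The set `Φ^+` of positive roots. -/
def Pos (R : RootSystemData V n) : Set V :=
  {α | α ∈ R.Φ ∧ ∃ c : Fin n → ℕ, α = ∑ i, (c i : ℝ) • R.simple i}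

/-- The Weyl group `W`, as the subgroup of linear automorphisms of `V` generated by
the reflections `s_α`, `α ∈ Φ`. -/
def weyl (R : RootSystemData V n) : Subgroup (V ≃ₗ[ℝ] V) :=
  Subgroup.closure {w | ∃ α ∈ R.Φ, ∀ u, w u = rsReflect α u}

/-- The Weyl group orbit `W(l)`. -/
def orbit (R : RootSystemData V n) (l : V) : Set V := {v | ∃ w ∈ R.weyl, v = w l}

/-- The permutohedron `Π(l) := ConvexHull W(l)`. -/
noncomputable def perm (R : RootSystemData V n) (l : V) : Set V := convexHull ℝ (R.orbit l)

/-- The root lattice `Q := Span_ℤ(Φ)`. -/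
def rootLattice (R : RootSystemData V n) : AddSubgroup V := AddSubgroup.closure R.Φ

/-- The coset `Q + l`. -/
def latticeCoset (R : RootSystemData V n) (l : V) : Set V := {v | v - l ∈ R.rootLattice}

/-- The discrete permutohedron `Π^Q(l) := Π(l) ∩ (Q + l)`. -/
noncomputable def permQ (R : RootSystemData V n) (l : V) : Set V :=
  R.perm l ∩ R.latticeCoset l

/-- The weight lattice `P`. -/
def weights (R : RootSystemData V n) : Set V :=
  {v | ∀ α ∈ R.Φ, ∃ z : ℤ, ⟪v, corootOf α⟫ = (z : ℝ)}

/-- A vector is dominant if it pairs nonnegatively with all simple coroots. -/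
def IsDomVec (R : RootSystemData V n) (v : V) : Prop :=
  ∀ i, 0 ≤ ⟪v, corootOf (R.simple i)⟫

/-- Dominant weights, i.e. elements of `P_{≥0}`. -/
def IsDominant (R : RootSystemData V n) (l : V) : Prop :=
  l ∈ R.weights ∧ R.IsDomVec l

/-- Root order: `μ ≤ l` iff `l − μ` is a nonnegative integer combination of simple roots. -/
def rootOrderLE (R : RootSystemData V n) (μ l : V) : Prop :=
  ∃ c : Fin n → ℕ, l - μ = ∑ i, (c i : ℝ) • R.simple i

/-- Membership in `ℕ[Φ]^W`: `W`-invariance of `k : Φ → ℕ`. -/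
def IsWInvariant (R : RootSystemData V n) (k : V → ℕ) : Prop :=
  ∀ w ∈ R.weyl, ∀ α ∈ R.Φ, k (w α) = k α

/-- Short roots: minimizers of the squared length. -/
def IsShort (R : RootSystemData V n) (α : V) : Prop :=
  α ∈ R.Φ ∧ ∀ β ∈ R.Φ, ⟪α, α⟫ ≤ ⟪β, β⟫

/-- Long roots: maximizers of the squared length. -/
def IsLong (R : RootSystemData V n) (α : V) : Prop :=
  α ∈ R.Φ ∧ ∀ β ∈ R.Φ, ⟪β, β⟫ ≤ ⟪α, α⟫

/-- Simply laced: all roots have the same length. -/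
def IsSimplyLaced (R : RootSystemData V n) : Prop :=
  ∀ α ∈ R.Φ, ∀ β ∈ R.Φ, ⟪α, α⟫ = ⟪β, β⟫

/-- `k ∈ ℕ[Φ]^W` is good if `Φ` is simply laced, or else `k` vanishing on short roots
implies it vanishes on long roots. -/
def IsGood (R : RootSystemData V n) (k : V → ℕ) : Prop :=
  R.IsSimplyLaced ∨ ((∀ α, R.IsShort α → k α = 0) → ∀ α, R.IsLong α → k α = 0)

/-- The symmetric interval-firing relation: `l → l + α` whenever
`⟨l + α/2, α^∨⟩ ∈ {−k(α), …, k(α)}`. -/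
def symFire (R : RootSystemData V n) (k : V → ℕ) (l m : V) : Prop :=
  ∃ α ∈ R.Pos, m = l + α ∧ ∃ z : ℤ,
    ⟪l + (2⁻¹ : ℝ) • α, corootOf α⟫ = (z : ℝ) ∧ -(k α : ℤ) ≤ z ∧ z ≤ (k α : ℤ)

/-- `ν` is the stabilization of `μ` for the symmetric interval-firing process. -/
def symStab (R : RootSystemData V n) (k : V → ℕ) (μ ν : V) : Prop :=
  Relation.ReflTransGen (R.symFire k) μ ν ∧ ∀ ξ, ¬ R.symFire k ν ξ

/-- The length of a Weyl group element: its number of inversions. -/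
noncomputable def len (R : RootSystemData V n) (w : V ≃ₗ[ℝ] V) : ℕ :=
  {α | α ∈ R.Pos ∧ w α ∉ R.Pos}.ncard

/-- `w` is the minimal length element of `W` such that `w⁻¹(l)` is dominant
(i.e. `w = w_l`). -/
def IsMinDomRep (R : RootSystemData V n) (l : V) (w : V ≃ₗ[ℝ] V) : Prop :=
  w ∈ R.weyl ∧ R.IsDomVec (w⁻¹ l) ∧
    ∀ w' ∈ R.weyl, R.IsDomVec (w'⁻¹ l) → R.len w ≤ R.len w'

/-- The fiber `(s^sym_𝐤)⁻¹(l)`: the set of weights whose symmetric interval-firing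
stabilization is `η_𝐤(l) = l + w_l(ρ_𝐤)`.  Here `ρk` is the vector `ρ_𝐤`. -/
def symFiber (R : RootSystemData V n) (k : V → ℕ) (ρk : V) (l : V) : Set V :=
  {μ | μ ∈ R.weights ∧ ∃ w, R.IsMinDomRep l w ∧ R.symStab k μ (l + w ρk)}

/-- The symmetric Ehrhart-like count `L^sym_l(𝐤)`. -/
noncomputable def symL (R : RootSystemData V n) (k : V → ℕ) (ρk : V) (l : V) : ℕ :=
  (R.symFiber k ρk l).ncard

/-- `I^{0,1}_l := {i : ⟨l, α_i^∨⟩ ∈ {0,1}}`. -/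
def I01 (R : RootSystemData V n) (l : V) : Set (Fin n) :=
  {i | ⟪l, corootOf (R.simple i)⟫ = 0 ∨ ⟪l, corootOf (R.simple i)⟫ = 1}

/-- The parabolic subgroup `W_I`. -/
def parabolic (R : RootSystemData V n) (I : Set (Fin n)) : Subgroup (V ≃ₗ[ℝ] V) :=
  Subgroup.closure {w | ∃ i ∈ I, ∀ u, w u = rsReflect (R.simple i) u}

/-- The parabolic sub-root system `Φ_I := Φ ∩ Span_ℝ{α_i : i ∈ I}`. -/
def parabolicRoots (R : RootSystemData V n) (I : Set (Fin n)) : Set V :=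
  R.Φ ∩ (Submodule.span ℝ (R.simple '' I) : Set V)

/-- The set `W^I` of minimal length representatives of the cosets of `W_I` in `W`. -/
noncomputable def minReps (R : RootSystemData V n) (I : Set (Fin n)) : Set (V ≃ₗ[ℝ] V) :=
  {w | w ∈ R.weyl ∧ ∀ w' ∈ R.weyl, w⁻¹ * w' ∈ R.parabolic I → R.len w ≤ R.len w'}

end RootSystemData

/-- The relative volume `rVol_Λ(X)` of a finite (linearly independent) set `X` with
respect to a lattice `Λ`: the number of `Λ`-points in the half-open parallelepiped
`Σ_{x ∈ X} [0, x)` (equivalently, the gcd of the maximal minors of the matrix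
expressing the elements of `X` in a basis of `Λ`). -/
noncomputable def rVol {V : Type*} [AddCommGroup V] [Module ℝ V]
    (Λ : AddSubgroup V) (X : Finset V) : ℕ :=
  {v : V | v ∈ Λ ∧ ∃ c : V → ℝ, (∀ x ∈ X, 0 ≤ c x ∧ c x < 1) ∧
    v = ∑ x ∈ X, c x • x}.ncard

/-!
If `μ` is not dominant, then `⟨μ, α_i^∨⟩ = -1` for some simple root (it is a negative integer
`≥ -1`), so `s_i μ = μ + α_i`. This weight lies in the same orbit and still satisfies
`⟨·, α^∨⟩ ≥ -1` on `Φ^+`, since `s_i` permutes `Φ^+ \ {α_i}`; and it is still `≤ λ`, because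
dominance of `λ` forces the `α_i`-coefficient of `λ - μ` to be positive. The coefficient sum of
`λ - μ` drops, so after finitely many steps `μ` is dominant, and then `μ = μ_dom` because a Weyl
orbit contains only one dominant vector. The latter is the classical argument: `W` is generated by
the simple reflections, and the exchange condition shortens words.
-/

section Reflection

variable {V : Type*} [NormedAddCommGroup V] [InnerProductSpace ℝ V]

lemma inner_corootOf (v α : V) : ⟪v, corootOf α⟫ = 2 / ⟪α, α⟫ * ⟪v, α⟫ :=
  real_inner_smul_right _ _ _

lemma inner_self_corootOf {α : V} (hα : α ≠ 0) : ⟪α, corootOf α⟫ = 2 := by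
  rw [inner_corootOf, div_mul_cancel₀ _ (real_inner_self_pos.2 hα).ne']

lemma corootOf_neg (α : V) : corootOf (-α) = -corootOf α := by
  simp [corootOf]

lemma corootOf_map {e : V ≃ₗ[ℝ] V} (he : ∀ a b, ⟪e a, e b⟫ = ⟪a, b⟫) (α : V) :
    corootOf (e α) = e (corootOf α) := by
  rw [corootOf, corootOf, he, map_smul]

lemma rsReflect_neg (α u : V) : rsReflect (-α) u = rsReflect α u := by
  simp [rsReflect, corootOf_neg]

lemma rsReflect_self {α : V} (hα : α ≠ 0) : rsReflect α α = -α := by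
  rw [rsReflect, inner_self_corootOf hα]
  module

lemma rsReflect_rsReflect (α u : V) : rsReflect α (rsReflect α u) = u := by
  rcases eq_or_ne α 0 with rfl | hα
  · simp [rsReflect]
  · rw [rsReflect, rsReflect, inner_sub_left, real_inner_smul_left, inner_self_corootOf hα]
    module

lemma inner_rsReflect_rsReflect (α u v : V) : ⟪rsReflect α u, rsReflect α v⟫ = ⟪u, v⟫ := by
  rcases eq_or_ne α 0 with rfl | hα
  · simp [rsReflect]
  · have hαα : ⟪α, α⟫ ≠ 0 := (real_inner_self_pos.2 hα).ne'
    simp only [rsReflect, inner_sub_left, inner_sub_right, real_inner_smul_left,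
      real_inner_smul_right, inner_corootOf, real_inner_comm α v]
    field_simp
    ring

noncomputable def rsReflectEquiv (α : V) : V ≃ₗ[ℝ] V :=
  LinearEquiv.ofInvolutive
    { toFun := rsReflect α
      map_add' := fun u v => by simp only [rsReflect, inner_add_left]; module
      map_smul' := fun t u => by
        simp only [rsReflect, real_inner_smul_left, RingHom.id_apply]
        module }
    (rsReflect_rsReflect α)

@[simp] lemma rsReflectEquiv_apply (α u : V) : rsReflectEquiv α u = rsReflect α u := rfl

lemma rsReflectEquiv_mul_self (α : V) : rsReflectEquiv α * rsReflectEquiv α = 1 :=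
  LinearEquiv.ext (rsReflect_rsReflect α)

lemma rsReflectEquiv_inv (α : V) : (rsReflectEquiv α)⁻¹ = rsReflectEquiv α :=
  inv_eq_of_mul_eq_one_right (rsReflectEquiv_mul_self α)

lemma rsReflectEquiv_neg (α : V) : rsReflectEquiv (-α) = rsReflectEquiv α :=
  LinearEquiv.ext (rsReflect_neg α)

lemma rsReflectEquiv_map {e : V ≃ₗ[ℝ] V} (he : ∀ a b, ⟪e a, e b⟫ = ⟪a, b⟫) (α : V) :
    rsReflectEquiv (e α) = e * rsReflectEquiv α * e⁻¹ := by
  ext x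
  obtain ⟨y, rfl⟩ := e.surjective x
  have hy : e⁻¹ (e y) = y := e.symm_apply_apply y
  simp only [LinearEquiv.mul_apply, hy, rsReflectEquiv_apply, rsReflect, corootOf_map he, he,
    map_sub, map_smul]

lemma inner_rsReflect_corootOf (α u β : V) :
    ⟪rsReflect α u, corootOf β⟫ = ⟪u, corootOf (rsReflect α β)⟫ := by
  rw [← rsReflectEquiv_apply α β, corootOf_map (inner_rsReflect_rsReflect α),
    ← inner_rsReflect_rsReflect α, rsReflectEquiv_apply, rsReflect_rsReflect]

end Reflection

namespace RootSystemData

variable {V : Type*} [NormedAddCommGroup V] [InnerProductSpace ℝ V] {n : ℕ}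
  (R : RootSystemData V n)

noncomputable def simpleBasis : Module.Basis (Fin n) ℝ V :=
  Module.Basis.mk R.simple_indep R.simple_span.ge

noncomputable def coord : V ≃ₗ[ℝ] (Fin n → ℝ) := R.simpleBasis.equivFun

lemma simpleBasis_apply (i : Fin n) : R.simpleBasis i = R.simple i :=
  Module.Basis.mk_apply _ _ i

lemma coord_sum_smul (c : Fin n → ℝ) : R.coord (∑ i, c i • R.simple i) = c := by
  simp_rw [← R.simpleBasis_apply, ← Module.Basis.equivFun_symm_apply]
  exact R.simpleBasis.equivFun.apply_symm_apply c

lemma sum_coord_smul (v : V) : ∑ i, R.coord v i • R.simple i = v := by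
  have h := R.simpleBasis.sum_equivFun v
  simp only [simpleBasis_apply] at h
  exact h

lemma coord_simple (i j : Fin n) : R.coord (R.simple i) j = if i = j then 1 else 0 := by
  have h := R.simpleBasis.equivFun_self i j
  rw [simpleBasis_apply] at h
  exact h

noncomputable def height (v : V) : ℝ := ∑ j, R.coord v j

lemma height_rsReflect_simple (i : Fin n) (v : V) :
    R.height (rsReflect (R.simple i) v) = R.height v - ⟪v, corootOf (R.simple i)⟫ := by
  simp [height, rsReflect, coord_simple, Finset.sum_sub_distrib]

lemma simple_ne_zero (i : Fin n) : R.simple i ≠ 0 :=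
  R.nonzero _ (R.simple_mem i)

lemma neg_mem {β : V} (hβ : β ∈ R.Φ) : -β ∈ R.Φ := by
  simpa [rsReflect_self (R.nonzero β hβ)] using R.reflect_mem β hβ β hβ

lemma simple_mem_pos (i : Fin n) : R.simple i ∈ R.Pos :=
  ⟨R.simple_mem i, Pi.single i 1, by simp [Pi.single_apply]⟩

lemma mem_pos_or_neg_mem_pos {β : V} (hβ : β ∈ R.Φ) : β ∈ R.Pos ∨ -β ∈ R.Pos := by
  rcases R.root_combo β hβ with ⟨c, hc⟩ | ⟨c, hc⟩
  · exact Or.inl ⟨hβ, c, hc⟩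
  · exact Or.inr ⟨R.neg_mem hβ, c, by rw [hc, neg_neg]⟩

lemma coord_nonneg_of_mem_pos {β : V} (hβ : β ∈ R.Pos) (j : Fin n) : 0 ≤ R.coord β j := by
  obtain ⟨-, c, rfl⟩ := hβ
  rw [R.coord_sum_smul]
  exact Nat.cast_nonneg _

lemma mem_pos_of_coord_pos {β : V} (hβ : β ∈ R.Φ) {j : Fin n} (hj : 0 < R.coord β j) :
    β ∈ R.Pos := by
  refine (R.mem_pos_or_neg_mem_pos hβ).resolve_right fun hneg => ?_
  have := R.coord_nonneg_of_mem_pos hneg j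
  rw [map_neg, Pi.neg_apply] at this
  linarith

lemma rsReflect_simple_mem_pos {β : V} (i : Fin n) (hβ : β ∈ R.Pos) (hne : β ≠ R.simple i) :
    rsReflect (R.simple i) β ∈ R.Pos := by
  have hcoord : ∀ j ≠ i, R.coord (rsReflect (R.simple i) β) j = R.coord β j := by
    intro j hj
    simp [rsReflect, coord_simple, Ne.symm hj]
  by_cases h : ∃ j ≠ i, 0 < R.coord β j
  · obtain ⟨j, hj, hpos⟩ := h
    exact R.mem_pos_of_coord_pos (R.reflect_mem _ (R.simple_mem i) β hβ.1)
      (hcoord j hj ▸ hpos)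
  · push Not at h
    have hβi : β = R.coord β i • R.simple i := by
      conv_lhs => rw [← R.sum_coord_smul β]
      refine Finset.sum_eq_single i (fun j _ hj => ?_) (by simp)
      rw [le_antisymm (h j hj) (R.coord_nonneg_of_mem_pos hβ j), zero_smul]
    have hspan : β ∈ (Submodule.span ℝ {R.simple i} : Set V) ∩ R.Φ :=
      ⟨Submodule.mem_span_singleton.2 ⟨_, hβi.symm⟩, hβ.1⟩
    rw [R.reduced _ (R.simple_mem i)] at hspan
    rcases hspan with rfl | hneg
    · exact absurd rfl hne
    · have := R.coord_nonneg_of_mem_pos hβ i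
      rw [Set.mem_singleton_iff.1 hneg, map_neg, Pi.neg_apply, R.coord_simple, if_pos rfl] at this
      norm_num at this

lemma inner_simple_corootOf_nonpos {i j : Fin n} (hij : j ≠ i) :
    ⟪R.simple j, corootOf (R.simple i)⟫ ≤ 0 := by
  have hpos : rsReflect (R.simple i) (R.simple j) ∈ R.Pos :=
    R.mem_pos_of_coord_pos (R.reflect_mem _ (R.simple_mem i) _ (R.simple_mem j))
      (j := j) (by simp [rsReflect, coord_simple, hij.symm])
  have := R.coord_nonneg_of_mem_pos hpos i
  simpa [rsReflect, coord_simple, hij, hij.symm] using this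

lemma inner_nonneg_of_isDomVec {v β : V} (hv : R.IsDomVec v) (hβ : β ∈ R.Pos) :
    0 ≤ ⟪v, β⟫ := by
  obtain ⟨-, c, rfl⟩ := hβ
  rw [inner_sum]
  refine Finset.sum_nonneg fun i _ => ?_
  have hi := hv i
  rw [inner_corootOf] at hi
  rw [real_inner_smul_right]
  exact mul_nonneg (Nat.cast_nonneg _)
    (nonneg_of_mul_nonneg_right hi (div_pos two_pos (real_inner_self_pos.2 (R.simple_ne_zero i))))

noncomputable def wordProd (L : List (Fin n)) : V ≃ₗ[ℝ] V :=
  (L.map fun i => rsReflectEquiv (R.simple i)).prod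

@[simp] lemma wordProd_nil : R.wordProd [] = 1 := rfl

lemma wordProd_cons (i : Fin n) (L : List (Fin n)) :
    R.wordProd (i :: L) = rsReflectEquiv (R.simple i) * R.wordProd L := by
  simp [wordProd]

lemma wordProd_append (L₁ L₂ : List (Fin n)) :
    R.wordProd (L₁ ++ L₂) = R.wordProd L₁ * R.wordProd L₂ := by
  simp [wordProd]

lemma wordProd_singleton (i : Fin n) : R.wordProd [i] = rsReflectEquiv (R.simple i) := by
  simp [wordProd]

lemma wordProd_reverse (L : List (Fin n)) : R.wordProd L.reverse = (R.wordProd L)⁻¹ := by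
  induction L with
  | nil => simp
  | cons i L ih =>
    rw [List.reverse_cons, wordProd_append, wordProd_singleton, ih, wordProd_cons, mul_inv_rev,
      rsReflectEquiv_inv]

lemma inner_wordProd (L : List (Fin n)) (u v : V) :
    ⟪R.wordProd L u, R.wordProd L v⟫ = ⟪u, v⟫ := by
  induction L with
  | nil => rfl
  | cons i L ih =>
    simp only [wordProd_cons, LinearEquiv.mul_apply, rsReflectEquiv_apply,
      inner_rsReflect_rsReflect, ih]

lemma rsReflectEquiv_mem_weyl {α : V} (hα : α ∈ R.Φ) : rsReflectEquiv α ∈ R.weyl :=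
  Subgroup.subset_closure ⟨α, hα, fun _ => rfl⟩

/-- Induction on the height of `β`: if `⟪β, α_i⟫ > 0` and `β ≠ α_i`, then `s_i β` is a lower
positive root and `s_β = s_i s_{s_i β} s_i`. -/
lemma exists_wordProd_eq_rsReflectEquiv_of_mem_pos (m : ℕ) {β : V} (hβ : β ∈ R.Pos)
    (hm : R.height β < m) : ∃ L, R.wordProd L = rsReflectEquiv β := by
  induction m generalizing β with
  | zero =>
    have hnonneg : 0 ≤ R.height β := Finset.sum_nonneg fun j _ => R.coord_nonneg_of_mem_pos hβ j
    exact absurd hm (by simpa using hnonneg)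
  | succ m ih =>
    obtain ⟨i, hi⟩ : ∃ i, 0 < ⟪β, corootOf (R.simple i)⟫ := by
      by_contra! h
      have := R.inner_nonneg_of_isDomVec (v := -β) (fun i => by simpa using h i) hβ
      rw [inner_neg_left, neg_nonneg] at this
      exact R.nonzero β hβ.1 (real_inner_self_nonpos.1 this)
    by_cases hβi : β = R.simple i
    · exact ⟨[i], by rw [wordProd_singleton, hβi]⟩
    obtain ⟨z, hz⟩ := R.crystal _ (R.simple_mem i) β hβ.1
    have hz1 : (1 : ℝ) ≤ ⟪β, corootOf (R.simple i)⟫ := by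
      rw [hz] at hi ⊢
      exact_mod_cast (show (0 : ℤ) < z by exact_mod_cast hi)
    obtain ⟨L, hL⟩ := ih (R.rsReflect_simple_mem_pos i hβ hβi) (by
      rw [height_rsReflect_simple]
      push_cast at hm
      linarith)
    refine ⟨i :: (L ++ [i]), ?_⟩
    rw [wordProd_cons, wordProd_append, wordProd_singleton, hL, ← rsReflectEquiv_apply,
      rsReflectEquiv_map (inner_rsReflect_rsReflect _), rsReflectEquiv_inv]
    simp only [mul_assoc, rsReflectEquiv_mul_self, mul_one]
    rw [← mul_assoc, rsReflectEquiv_mul_self, one_mul]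

lemma exists_wordProd_eq_rsReflectEquiv {β : V} (hβ : β ∈ R.Φ) :
    ∃ L, R.wordProd L = rsReflectEquiv β := by
  obtain ⟨m, hm⟩ := exists_nat_gt (max (R.height β) (R.height (-β)))
  rcases R.mem_pos_or_neg_mem_pos hβ with hpos | hneg
  · exact R.exists_wordProd_eq_rsReflectEquiv_of_mem_pos m hpos (by order)
  · rw [← rsReflectEquiv_neg]
    exact R.exists_wordProd_eq_rsReflectEquiv_of_mem_pos m hneg (by order)

lemma exists_wordProd_eq {w : V ≃ₗ[ℝ] V} (hw : w ∈ R.weyl) : ∃ L, R.wordProd L = w := by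
  induction hw using Subgroup.closure_induction with
  | mem x hx =>
    obtain ⟨α, hα, hx⟩ := hx
    rw [show x = rsReflectEquiv α from LinearEquiv.ext hx]
    exact R.exists_wordProd_eq_rsReflectEquiv hα
  | one => exact ⟨[], rfl⟩
  | mul x y _ _ hx hy =>
    obtain ⟨L₁, rfl⟩ := hx
    obtain ⟨L₂, rfl⟩ := hy
    exact ⟨L₁ ++ L₂, R.wordProd_append L₁ L₂⟩
  | inv x _ hx =>
    obtain ⟨L, rfl⟩ := hx
    exact ⟨L.reverse, R.wordProd_reverse L⟩

lemma exists_wordProd_eq_mul_of_not_mem_pos (L : List (Fin n)) (i : Fin n)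
    (h : R.wordProd L (R.simple i) ∉ R.Pos) :
    ∃ L', R.wordProd L' = R.wordProd L * rsReflectEquiv (R.simple i) ∧ L'.length < L.length := by
  induction L with
  | nil => exact absurd (R.simple_mem_pos i) h
  | cons k L ih =>
    by_cases hL : R.wordProd L (R.simple i) ∈ R.Pos
    · have hk : R.wordProd L (R.simple i) = R.simple k := by
        by_contra hne
        exact h (R.rsReflect_simple_mem_pos k hL hne)
      refine ⟨L, ?_, by simp⟩
      rw [wordProd_cons, ← hk, rsReflectEquiv_map (R.inner_wordProd L)]
      simp only [mul_assoc, inv_mul_cancel_left, rsReflectEquiv_mul_self, mul_one]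
    · obtain ⟨L', hL', hlen⟩ := ih hL
      exact ⟨k :: L', by rw [wordProd_cons, hL', wordProd_cons, mul_assoc], by simpa⟩

lemma rsReflect_simple_eq_self_of_isDomVec {v : V} {i : Fin n} {L : List (Fin n)}
    (hv : R.IsDomVec v) (hLv : R.IsDomVec (R.wordProd (L ++ [i]) v))
    (hL : R.wordProd L (R.simple i) ∈ R.Pos) :
    rsReflect (R.simple i) v = v := by
  have hw : R.wordProd (L ++ [i]) = R.wordProd L * rsReflectEquiv (R.simple i) := by
    rw [wordProd_append, wordProd_singleton]
  have hwi : R.wordProd (L ++ [i]) (R.simple i) = -R.wordProd L (R.simple i) := by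
    rw [hw, LinearEquiv.mul_apply, rsReflectEquiv_apply, rsReflect_self (R.simple_ne_zero i),
      map_neg]
  have hsign : ⟪R.wordProd (L ++ [i]) v, R.wordProd L (R.simple i)⟫ = -⟪v, R.simple i⟫ := by
    rw [← R.inner_wordProd (L ++ [i]) v (R.simple i), hwi, inner_neg_right, neg_neg]
  have h₁ := R.inner_nonneg_of_isDomVec hLv hL
  have h₂ := R.inner_nonneg_of_isDomVec hv (R.simple_mem_pos i)
  have hzero : ⟪v, R.simple i⟫ = 0 := by linarith
  rw [rsReflect, inner_corootOf, hzero, mul_zero, zero_smul, sub_zero]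

/-- Strong induction on the length of the word: either `s_i` fixes `v`, or the exchange condition
shortens the word. -/
lemma wordProd_apply_eq_self_of_isDomVec (L : List (Fin n)) {v : V} (hv : R.IsDomVec v)
    (hLv : R.IsDomVec (R.wordProd L v)) : R.wordProd L v = v := by
  obtain rfl | ⟨L₀, i, rfl⟩ := L.eq_nil_or_concat'
  · rfl
  have hw : R.wordProd (L₀ ++ [i]) = R.wordProd L₀ * rsReflectEquiv (R.simple i) := by
    rw [wordProd_append, wordProd_singleton]
  by_cases hL₀ : R.wordProd L₀ (R.simple i) ∈ R.Pos
  · have hfix := R.rsReflect_simple_eq_self_of_isDomVec hv hLv hL₀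
    rw [hw, LinearEquiv.mul_apply, rsReflectEquiv_apply, hfix] at hLv ⊢
    exact wordProd_apply_eq_self_of_isDomVec L₀ hv hLv
  · obtain ⟨L', hL', hlen⟩ := R.exists_wordProd_eq_mul_of_not_mem_pos L₀ i hL₀
    rw [hw, ← hL'] at hLv ⊢
    exact wordProd_apply_eq_self_of_isDomVec L' hv hLv
termination_by L.length
decreasing_by all_goals (subst_vars; simp only [List.length_append, List.length_singleton]; omega)

lemma eq_of_isDomVec_of_mem_weyl {w : V ≃ₗ[ℝ] V} (hw : w ∈ R.weyl) {v : V} (hv : R.IsDomVec v)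
    (hwv : R.IsDomVec (w v)) : w v = v := by
  obtain ⟨L, rfl⟩ := R.exists_wordProd_eq hw
  exact R.wordProd_apply_eq_self_of_isDomVec L hv hwv

lemma rsReflect_mem_weights {α v : V} (hα : α ∈ R.Φ) (hv : v ∈ R.weights) :
    rsReflect α v ∈ R.weights := fun β hβ => by
  rw [inner_rsReflect_corootOf]
  exact hv _ (R.reflect_mem α hα β hβ)

lemma mem_orbit_rsReflect {α v u : V} (hα : α ∈ R.Φ) (hu : u ∈ R.orbit v) :
    u ∈ R.orbit (rsReflect α v) := by
  obtain ⟨w, hw, rfl⟩ := hu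
  refine ⟨w * rsReflectEquiv α, mul_mem hw (R.rsReflectEquiv_mem_weyl hα), ?_⟩
  rw [LinearEquiv.mul_apply, rsReflectEquiv_apply, rsReflect_rsReflect]

lemma neg_one_le_inner_rsReflect_simple_corootOf {μ : V} {i : Fin n}
    (hge : ∀ α ∈ R.Pos, (-1 : ℝ) ≤ ⟪μ, corootOf α⟫) (hi : ⟪μ, corootOf (R.simple i)⟫ ≤ 1) :
    ∀ β ∈ R.Pos, (-1 : ℝ) ≤ ⟪rsReflect (R.simple i) μ, corootOf β⟫ := by
  intro β hβ
  rw [inner_rsReflect_corootOf]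
  by_cases hβi : β = R.simple i
  · rw [hβi, rsReflect_self (R.simple_ne_zero i), corootOf_neg, inner_neg_right]
    linarith
  · exact hge _ (R.rsReflect_simple_mem_pos i hβ hβi)

lemma exists_inner_corootOf_eq_neg_one {μ : V} (hμ : μ ∈ R.weights)
    (hge : ∀ α ∈ R.Pos, (-1 : ℝ) ≤ ⟪μ, corootOf α⟫) (hdom : ¬R.IsDomVec μ) :
    ∃ i, ⟪μ, corootOf (R.simple i)⟫ = -1 := by
  obtain ⟨i, hneg⟩ : ∃ i, ⟪μ, corootOf (R.simple i)⟫ < 0 := by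
    simpa [IsDomVec] using hdom
  obtain ⟨z, hz⟩ := hμ _ (R.simple_mem i)
  have hge_i := hge _ (R.simple_mem_pos i)
  refine ⟨i, ?_⟩
  rw [hz] at hneg hge_i ⊢
  have hz_neg : z < 0 := by exact_mod_cast hneg
  have hz_ge : -1 ≤ z := by exact_mod_cast hge_i
  obtain rfl : z = -1 := by omega
  norm_num

lemma exists_sum_smul_lt_of_inner_corootOf_pos {v : V} {k : Fin n → ℕ}
    (hk : v = ∑ j, (k j : ℝ) • R.simple j) {i : Fin n} (hi : 0 < ⟪v, corootOf (R.simple i)⟫) :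
    ∃ k' : Fin n → ℕ, v - R.simple i = ∑ j, (k' j : ℝ) • R.simple j ∧ ∑ j, k' j < ∑ j, k j := by
  have hki : k i ≠ 0 := by
    intro hki
    refine hi.not_ge ?_
    rw [hk, sum_inner]
    refine Finset.sum_nonpos fun j _ => ?_
    rw [real_inner_smul_left]
    rcases eq_or_ne j i with rfl | hji
    · simp [hki]
    · exact mul_nonpos_of_nonneg_of_nonpos (Nat.cast_nonneg _) (R.inner_simple_corootOf_nonpos hji)
  refine ⟨Function.update k i (k i - 1), ?_, ?_⟩
  · have herase : ∑ j ∈ Finset.univ.erase i, (Function.update k i (k i - 1) j : ℝ) • R.simple j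
        = ∑ j ∈ Finset.univ.erase i, (k j : ℝ) • R.simple j :=
      Finset.sum_congr rfl fun j hj => by rw [Function.update_of_ne (Finset.ne_of_mem_erase hj)]
    rw [hk, ← Finset.add_sum_erase _ _ (Finset.mem_univ i),
      ← Finset.add_sum_erase _ _ (Finset.mem_univ i), herase, Function.update_self,
      Nat.cast_sub (Nat.one_le_iff_ne_zero.2 hki)]
    module
  · rw [Finset.sum_update_of_mem (Finset.mem_univ i), Finset.sdiff_singleton_eq_erase,
      ← Finset.add_sum_erase _ _ (Finset.mem_univ i)]
    omega

lemma rootOrderLE_of_mem_orbit {l : V} (hl : R.IsDomVec l) {μ : V} (hμ : μ ∈ R.weights)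
    (hge : ∀ α ∈ R.Pos, (-1 : ℝ) ≤ ⟪μ, corootOf α⟫) (k : Fin n → ℕ)
    (hk : l - μ = ∑ j, (k j : ℝ) • R.simple j) {μdom : V} (hμdom : μdom ∈ R.orbit μ)
    (hdom : R.IsDomVec μdom) : R.rootOrderLE μdom l := by
  by_cases hμ_dom : R.IsDomVec μ
  · obtain ⟨w, hw, rfl⟩ := hμdom
    rw [R.eq_of_isDomVec_of_mem_weyl hw hμ_dom hdom]
    exact ⟨k, hk⟩
  obtain ⟨i, hi⟩ := R.exists_inner_corootOf_eq_neg_one hμ hge hμ_dom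
  have hμi : rsReflect (R.simple i) μ = μ + R.simple i := by
    rw [rsReflect, hi]
    module
  obtain ⟨k', hk', hlt⟩ := R.exists_sum_smul_lt_of_inner_corootOf_pos hk (i := i) (by
    rw [inner_sub_left, hi]
    linarith [hl i])
  rw [sub_sub, ← hμi] at hk'
  exact rootOrderLE_of_mem_orbit hl (R.rsReflect_mem_weights (R.simple_mem i) hμ)
    (R.neg_one_le_inner_rsReflect_simple_corootOf hge (by rw [hi]; norm_num)) k' hk'
    (R.mem_orbit_rsReflect (R.simple_mem i) hμdom) hdom
termination_by ∑ j, k j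
decreasing_by exact hlt

end RootSystemData

/-- Proposition 2.6: if `⟨μ, α^∨⟩ ≥ −1` for all positive roots `α`,
then any dominant weight `λ ≥ μ` in root order also satisfies `λ ≥ μ_dom`. -/
theorem unique_dominant_greater {V : Type*} [NormedAddCommGroup V] [InnerProductSpace ℝ V]
    {n : ℕ} (R : RootSystemData V n) (μ : V) (hμ : μ ∈ R.weights)
    (hge : ∀ α ∈ R.Pos, (-1 : ℝ) ≤ ⟪μ, corootOf α⟫)
    (l : V) (hl : R.IsDominant l) (hle : R.rootOrderLE μ l)
    (μdom : V) (hμdom : μdom ∈ R.orbit μ) (hdom : R.IsDomVec μdom) :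
    R.rootOrderLE μdom l := by
  obtain ⟨k, hk⟩ := hle
  exact R.rootOrderLE_of_mem_orbit hl.2 hμ hge k hk hμdom hdom
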